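/- arXiv:2309.12654 — 2 statements merged into one kernel-verified Lean document; each statement's English description precedes it below -/
import Mathlib

section
/- The constant q_θ := m · Σ_{i≥m} ( m/(i³(i+1)) + (i+1−m)/(i(i+1)³) ) satisfies q_θ < 1 (for every integer m ≥ 2). -/
noncomputable section
open MeasureTheory Filter Set

namespace Theta

/-- θ = 1/√m -/
def th (m : ℕ) : ℝ := 1 / Real.sqrt m

/-- The θ-expansion map T_θ on [0,θ]. -/
def T (m : ℕ) (x : ℝ) : ℝ := if x = 0 then 0 else 1 / x - th m * ⌊1 / (x * th m)⌋₊

/-- The n-th digit a_n(x) (n ≥ 1), a_n(x) = a_1(T_θ^{n-1} x) with a_1(x) = ⌊1/(xθ)⌋. -/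
def a (m n : ℕ) (x : ℝ) : ℕ := ⌊1 / ((T m)^[n - 1] x * th m)⌋₊

/-- Ω: the irrationals in (0,θ). -/
def Omega (m : ℕ) : Set ℝ := {x | x ∈ Set.Ioo 0 (th m) ∧ Irrational x}

/-- Convergent numerators, shifted: `p m x (n+1)` is p_n(x), `p m x 0` is p_{-1} = 1. -/
def p (m : ℕ) (x : ℝ) : ℕ → ℝ
  | 0 => 1
  | 1 => 0
  | n + 2 => (a m (n + 1) x) * th m * p m x (n + 1) + p m x n

/-- Convergent denominators, shifted: `q m x (n+1)` is q_n(x), `q m x 0` is q_{-1} = 0. -/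
def q (m : ℕ) (x : ℝ) : ℕ → ℝ
  | 0 => 0
  | 1 => 1
  | n + 2 => (a m (n + 1) x) * th m * q m x (n + 1) + q m x n

/-- q_θ = m·∑_{i≥m}( m/(i³(i+1)) + (i+1−m)/(i(i+1)³) ) < 1 (sum over i ≥ m written
with i = m + j, j ∈ ℕ). -/
theorem stmt_13 (m : ℕ) (hm : 2 ≤ m) :
    (m : ℝ) *
        ∑' j : ℕ,
          ((m : ℝ) / (((m : ℝ) + j) ^ 3 * (((m : ℝ) + j) + 1)) +
            (((m : ℝ) + j) + 1 - (m : ℝ)) / (((m : ℝ) + j) * (((m : ℝ) + j) + 1) ^ 3)) < 1 := by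
  have hm1 : (2 : ℝ) ≤ (m : ℝ) := by exact_mod_cast hm
  set f : ℕ → ℝ := fun j =>
    ((m : ℝ) / (((m : ℝ) + j) ^ 3 * (((m : ℝ) + j) + 1)) +
      (((m : ℝ) + j) + 1 - (m : ℝ)) / (((m : ℝ) + j) * (((m : ℝ) + j) + 1) ^ 3)) with hf
  set F : ℕ → ℝ := fun n => 1 / ((m : ℝ) + n) ^ 2 with hF
  have hxpos : ∀ j : ℕ, (0 : ℝ) < (m : ℝ) + j := fun j => by positivity
  have hb : ∀ j : ℕ, f j ≤ F j - F (j + 1) := by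
    intro j
    have hx : (0 : ℝ) < (m : ℝ) + j := hxpos j
    have hx1 : (0 : ℝ) < ((m : ℝ) + j) + 1 := by linarith
    have hmx : (m : ℝ) ≤ (m : ℝ) + j := by
      have : (0 : ℝ) ≤ (j : ℝ) := Nat.cast_nonneg j
      linarith
    simp only [hf, hF]
    push_cast
    rw [div_add_div _ _ (by positivity) (by positivity),
      div_sub_div _ _ (by positivity) (by positivity),
      div_le_div_iff₀ (by positivity) (by positivity)]
    have core : (m : ℝ) * (((m : ℝ) + j) + 1) ^ 2 + (((m : ℝ) + j) + 1 - (m : ℝ)) * ((m : ℝ) + j) ^ 2 ≤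
        (2 * ((m : ℝ) + j) + 1) * ((m : ℝ) + j) * (((m : ℝ) + j) + 1) := by
      nlinarith [mul_le_mul_of_nonneg_right hmx (by positivity : (0:ℝ) ≤ 2 * ((m : ℝ) + j) + 1),
        pow_pos hx 3]
    nlinarith [mul_le_mul_of_nonneg_right core
      (by positivity : (0:ℝ) ≤ ((m : ℝ) + j) ^ 3 * (((m : ℝ) + j) + 1) ^ 3)]
  have hgnn : ∀ j : ℕ, 0 ≤ F j - F (j + 1) := by
    intro j
    have hx : (0 : ℝ) < (m : ℝ) + j := hxpos j
    have : ((m : ℝ) + j) ^ 2 ≤ ((m : ℝ) + (j + 1 : ℕ)) ^ 2 := by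
      push_cast; nlinarith
    simp only [hF]
    have h2 : (0 : ℝ) < ((m : ℝ) + j) ^ 2 := by positivity
    have h3 : (0 : ℝ) < ((m : ℝ) + (j + 1 : ℕ)) ^ 2 := by positivity
    rw [sub_nonneg]
    exact one_div_le_one_div_of_le h2 this
  have hfnn : ∀ j : ℕ, 0 ≤ f j := by
    intro j
    have hx : (0 : ℝ) < (m : ℝ) + j := hxpos j
    have hx1 : (0 : ℝ) < ((m : ℝ) + j) + 1 := by linarith
    simp only [hf]
    have h1 : (0 : ℝ) ≤ (m : ℝ) / (((m : ℝ) + j) ^ 3 * (((m : ℝ) + j) + 1)) := by positivity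
    have h2 : (0 : ℝ) ≤ (((m : ℝ) + j) + 1 - (m : ℝ)) / (((m : ℝ) + j) * (((m : ℝ) + j) + 1) ^ 3) := by
      apply div_nonneg _ (by positivity)
      have : (0 : ℝ) ≤ (j : ℝ) := Nat.cast_nonneg j
      linarith
    linarith
  have htsum : ∑' j, f j ≤ 1 / (m : ℝ) ^ 2 := by
    apply tsum_le_of_sum_le' (by positivity)
    intro s
    set N := s.sup id + 1 with hN
    have hsub : s ⊆ Finset.range N := by
      intro x hx
      exact Finset.mem_range.mpr (Nat.lt_succ_of_le (Finset.le_sup (f := id) hx))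
    calc ∑ j ∈ s, f j ≤ ∑ j ∈ s, (F j - F (j + 1)) := Finset.sum_le_sum fun j _ => hb j
      _ ≤ ∑ j ∈ Finset.range N, (F j - F (j + 1)) :=
          Finset.sum_le_sum_of_subset_of_nonneg hsub fun j _ _ => hgnn j
      _ = F 0 - F N := Finset.sum_range_sub' F N
      _ ≤ F 0 := by
          have : 0 ≤ F N := by simp only [hF]; positivity
          linarith
      _ = 1 / (m : ℝ) ^ 2 := by simp [hF]
  have hmpos : (0 : ℝ) < (m : ℝ) := by linarith
  have : (m : ℝ) * ∑' j, f j ≤ (m : ℝ) * (1 / (m : ℝ) ^ 2) :=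
    mul_le_mul_of_nonneg_left htsum hmpos.le
  have hlt : (m : ℝ) * (1 / (m : ℝ) ^ 2) < 1 := by
    rw [mul_one_div, div_lt_one (by positivity)]
    nlinarith [hm1]
  linarith
end Theta
end
end

section
/- Let (φ(n))_{n≥1} be a positive nondecreasing sequence. If Σ_{n≥1} 1/φ(n) < ∞, then for Lebesgue-almost every x ∈ (0,θ) one has limsup_{N→∞} L_N(x)/φ(N) = 0; if Σ_{n≥1} 1/φ(n) = ∞, then for Lebesgue-almost every x ∈ (0,θ) one has limsup_{N→∞} L_N(x)/φ(N) = ∞. In particular, for almost every x the limsup is either 0 or ∞. -/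
/-!
The inverse branches of `T_θⁿ` are Möbius maps `u ↦ (A u + B) / (C u + D)` of determinant `±1`
with `0 ≤ C ≤ D`, so they map `(0, θ)` onto the cylinders of rank `n` with distortion at most `2`.
Since `a_{n+1}(x) ≥ c` holds exactly when `Tⁿ x ≤ 1 / (c θ)`, the conditional probability of
`a_{n+1} ≥ c` given the first `n` digits lies between `min 1 (m / c)` and a constant times `1 / c`.

If `∑ 1/φ(n) < ∞`, the upper bound and Borel–Cantelli give `a_n ≤ ε φ(n)` eventually for every
`ε > 0`; as `φ` is nondecreasing and tends to `∞`, this forces `L_N / φ(N) → 0`.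
If `∑ 1/φ(n) = ∞`, the lower bound, applied one digit at a time, bounds the measure of
`{a_n < c_n for N < n ≤ N + K}` by `θ ∏ (1 - min 1 (m / c_n))`, which tends to `0` for
`c_n ≈ t φ(n)`; so for every `t`, `a_n ≥ t φ(n)` infinitely often and the limsup is `∞`.
-/

noncomputable section
open MeasureTheory Filter Set

namespace Theta

/-- L_N(x): the largest of the first N digits. -/
def L (m N : ℕ) (x : ℝ) : ℕ := Finset.sup (Finset.Icc 1 N) fun n => a m n x

open Topology

section Sequences

lemma tendsto_prod_one_sub_of_not_summable {r : ℕ → ℝ} (h0 : ∀ n, 0 ≤ r n) (h1 : ∀ n, r n ≤ 1)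
    (hr : ¬Summable r) : Tendsto (fun K => ∏ k ∈ Finset.range K, (1 - r k)) atTop (𝓝 0) := by
  have hexp : Tendsto (fun K => Real.exp (-∑ k ∈ Finset.range K, r k)) atTop (𝓝 0) :=
    Real.tendsto_exp_atBot.comp <| tendsto_neg_atTop_atBot.comp <|
      (not_summable_iff_tendsto_nat_atTop_of_nonneg h0).1 hr
  refine squeeze_zero (fun K => Finset.prod_nonneg fun k _ => sub_nonneg.2 (h1 k))
    (fun K => ?_) hexp
  rw [← Finset.sum_neg_distrib, Real.exp_sum]
  exact Finset.prod_le_prod (fun k _ => sub_nonneg.2 (h1 k)) fun k _ => Real.one_sub_le_exp_neg _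

lemma not_summable_min_one {x : ℕ → ℝ} (hx : ¬Summable x) : ¬Summable fun n => min 1 (x n) := by
  intro h
  refine hx (h.congr_atTop ?_)
  filter_upwards [h.tendsto_atTop_zero.eventually_lt_const one_pos] with n hn
  exact min_eq_right (not_le.1 fun h1 => hn.not_ge (min_eq_left h1).ge).le

lemma natCast_finset_sup_le {ι : Type*} {s : Finset ι} {f : ι → ℕ} {y : ℝ} (hy : 0 ≤ y)
    (h : ∀ i ∈ s, (f i : ℝ) ≤ y) : ((s.sup f : ℕ) : ℝ) ≤ y :=
  (Nat.cast_le.2 (Finset.sup_le fun i hi => Nat.le_floor (h i hi))).trans (Nat.floor_le hy)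

variable {f : ℕ → ℕ} {φ : ℕ → ℝ}

lemma tendsto_atTop_of_summable_one_div (hpos : ∀ n, 1 ≤ n → 0 < φ n)
    (hsum : Summable fun n => 1 / φ (n + 1)) : Tendsto φ atTop atTop := by
  rw [← tendsto_add_atTop_iff_nat 1]
  have h : Tendsto (fun n => 1 / φ (n + 1)) atTop (𝓝[>] 0) :=
    tendsto_nhdsWithin_iff.2 ⟨hsum.tendsto_atTop_zero,
      Eventually.of_forall fun n => one_div_pos.2 (hpos _ (by omega))⟩
  simpa only [one_div, Pi.inv_def, inv_inv] using h.inv_tendsto_nhdsGT_zero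

lemma tendsto_sup_div_zero (hmono : ∀ n k, 1 ≤ n → n ≤ k → φ n ≤ φ k)
    (hφ : Tendsto φ atTop atTop) (hf : ∀ ε > 0, ∀ᶠ n in atTop, (f n : ℝ) ≤ ε * φ n) :
    Tendsto (fun N => (((Finset.Icc 1 N).sup f : ℕ) : ℝ) / φ N) atTop (𝓝 0) := by
  refine tendsto_order.2 ⟨fun b hb => ?_, fun ε hε => ?_⟩
  · filter_upwards [hφ.eventually_gt_atTop 0] with N hN
    exact hb.trans_le (by positivity)
  obtain ⟨n₀, hn₀⟩ := eventually_atTop.1 (hf (ε / 2) (half_pos hε))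
  set K : ℝ := (((Finset.Icc 1 n₀).sup f : ℕ) : ℝ)
  filter_upwards [eventually_ge_atTop n₀, hφ.eventually_gt_atTop 0,
    hφ.eventually_ge_atTop (2 * K / ε)] with N hN hφN hKN
  have hK : K ≤ ε / 2 * φ N := by
    rw [div_le_iff₀ hε] at hKN
    linarith
  rw [div_lt_iff₀ hφN]
  refine (natCast_finset_sup_le (y := ε / 2 * φ N) (by positivity) fun k hk => ?_).trans_lt
    (by linarith [mul_pos hε hφN])
  obtain ⟨hk1, hkN⟩ := Finset.mem_Icc.1 hk
  rcases le_or_gt k n₀ with hkn | hkn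
  · exact (Nat.cast_le.2 (Finset.le_sup (Finset.mem_Icc.2 ⟨hk1, hkn⟩))).trans hK
  · exact (hn₀ k hkn.le).trans (by gcongr; exact hmono k N hk1 hkN)

lemma limsup_sup_div_eq_top (hpos : ∀ n, 1 ≤ n → 0 < φ n)
    (hf : ∀ t : ℕ, ∃ᶠ n in atTop, t * φ n ≤ f n) :
    limsup (fun N => (((((Finset.Icc 1 N).sup f : ℕ) : ℝ) / φ N : ℝ) : EReal)) atTop = ⊤ := by
  rw [EReal.eq_top_iff_forall_lt]
  intro y
  obtain ⟨t, ht⟩ := exists_nat_gt y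
  refine (EReal.coe_lt_coe_iff.2 ht).trans_le (le_limsup_of_frequently_le' ?_)
  refine ((hf t).and_eventually (eventually_ge_atTop 1)).mono fun n ⟨hn, h1⟩ => ?_
  rw [EReal.coe_le_coe_iff, le_div_iff₀ (hpos n h1)]
  exact hn.trans (Nat.cast_le.2 (Finset.le_sup (Finset.mem_Icc.2 ⟨h1, le_rfl⟩)))

lemma not_summable_min_one_div_ceil (hpos : ∀ n, 1 ≤ n → 0 < φ n)
    (hmono : ∀ n k, 1 ≤ n → n ≤ k → φ n ≤ φ k) (hdiv : ¬Summable fun n => 1 / φ (n + 1))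
    {C : ℝ} (hC : 0 < C) (t : ℕ) :
    ¬Summable fun n => min 1 (C / (⌈t * φ n⌉₊ + 1 : ℕ)) := by
  have hφ1 := hpos 1 le_rfl
  set K := t + 2 / φ 1
  have hK : 0 < K := by positivity
  have hle : ∀ n, min 1 (C / K * (1 / φ (n + 1))) ≤ min 1 (C / (⌈t * φ (n + 1)⌉₊ + 1 : ℕ)) := by
    intro n
    have hφn := hpos (n + 1) (by omega)
    have h2 : 2 ≤ 2 / φ 1 * φ (n + 1) := by
      rw [div_mul_eq_mul_div, le_div_iff₀ hφ1]
      linarith [hmono 1 (n + 1) le_rfl (by omega)]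
    have hc : ((⌈t * φ (n + 1)⌉₊ + 1 : ℕ) : ℝ) ≤ K * φ (n + 1) := by
      push_cast
      linarith [Nat.ceil_lt_add_one (by positivity : (0 : ℝ) ≤ t * φ (n + 1))]
    refine min_le_min le_rfl ?_
    rw [div_mul_div_comm, mul_one]
    exact div_le_div_of_nonneg_left hC.le (by positivity) hc
  intro h
  refine not_summable_min_one (mt (summable_mul_left_iff (div_pos hC hK).ne').1 hdiv) ?_
  exact ((summable_nat_add_iff 1).2 h).of_nonneg_of_le
    (fun n => le_min zero_le_one (by have := hpos (n + 1) (by omega); positivity)) hle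

end Sequences

section Theta
variable {m : ℕ}

lemma th_pos (hm : 0 < m) : 0 < th m :=
  one_div_pos.2 (Real.sqrt_pos.2 (Nat.cast_pos.2 hm))

lemma th_le_one (hm : 0 < m) : th m ≤ 1 :=
  div_le_one_of_le₀ (Real.one_le_sqrt.2 (Nat.one_le_cast.2 hm)) (Real.sqrt_nonneg _)

lemma natCast_mul_th_sq (hm : 0 < m) : (m : ℝ) * th m ^ 2 = 1 := by
  have : (0 : ℝ) < m := Nat.cast_pos.2 hm
  rw [th, div_pow, Real.sq_sqrt this.le]
  field_simp

lemma one_le_th_mul (hm : 0 < m) {b : ℕ} (hb : m ≤ b) : 1 ≤ th m * b := by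
  have hθ := th_pos hm
  have hθ1 := th_le_one hm
  have hsq := natCast_mul_th_sq hm
  have hmb : (m : ℝ) ≤ b := Nat.cast_le.2 hb
  nlinarith

lemma one_div_natCast_mul_th (hm : 0 < m) : 1 / (m * th m) = th m := by
  have hθ := th_pos hm
  rw [div_eq_iff (by positivity), ← natCast_mul_th_sq hm]
  ring

lemma one_div_th_mul_add_mem_Ioo (hm : 0 < m) {b : ℕ} (hb : m ≤ b) {u : ℝ} (hu : 0 < u) :
    1 / (th m * b + u) ∈ Ioo 0 (th m) := by
  have hθ := th_pos hm
  have hθb := one_le_th_mul hm hb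
  have hsq := natCast_mul_th_sq hm
  have hmb : (m : ℝ) ≤ b := Nat.cast_le.2 hb
  refine ⟨by positivity, ?_⟩
  rw [div_lt_iff₀ (by positivity)]
  nlinarith [mul_pos hθ hu]

lemma a_one_one_div_th_mul_add (hm : 0 < m) (b : ℕ) {u : ℝ} (hu : u ∈ Ioo 0 (th m)) :
    a m 1 (1 / (th m * b + u)) = b := by
  have hθ := th_pos hm
  have hu₀ := hu.1
  have hy : 1 / (1 / (th m * b + u) * th m) = b + u / th m := by
    field_simp
  have hfrac : u / th m < 1 := (div_lt_one hθ).2 hu.2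
  rw [a, Nat.sub_self, Function.iterate_zero_apply, hy, Nat.floor_eq_iff (by positivity)]
  constructor <;> linarith [div_pos hu.1 hθ]

lemma T_one_div_th_mul_add (hm : 0 < m) (b : ℕ) {u : ℝ} (hu : u ∈ Ioo 0 (th m)) :
    T m (1 / (th m * b + u)) = u := by
  have hθ := th_pos hm
  have hu₀ := hu.1
  have hy : 1 / (th m * b + u) ≠ 0 := by positivity
  have hb := a_one_one_div_th_mul_add hm b hu
  rw [a, Nat.sub_self, Function.iterate_zero_apply] at hb
  rw [T, if_neg hy, hb, one_div_one_div]
  ring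

lemma eq_one_div_th_mul_a_add_T {x : ℝ} (hx : x ≠ 0) : x = 1 / (th m * a m 1 x + T m x) := by
  rw [T, if_neg hx, a, Nat.sub_self, Function.iterate_zero_apply]
  simp

-- `T` is `θ` times the fractional part of `1 / (xθ)`.
lemma T_mem_Ico (hm : 0 < m) {x : ℝ} (hx : 0 < x) : T m x ∈ Ico 0 (th m) := by
  have hθ := th_pos hm
  have hy : 0 ≤ 1 / (x * th m) := by positivity
  have hT : T m x = th m * (1 / (x * th m) - ⌊1 / (x * th m)⌋₊) := by
    rw [T, if_neg hx.ne']
    field_simp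
  rw [hT]
  constructor
  · exact mul_nonneg hθ.le (sub_nonneg.2 (Nat.floor_le hy))
  · nlinarith [Nat.lt_floor_add_one (1 / (x * th m))]

lemma a_succ_succ (n : ℕ) (x : ℝ) : a m (n + 2) x = a m (n + 1) (T m x) := by
  simp only [a, show n + 2 - 1 = n + 1 from rfl, Nat.add_sub_cancel, Function.iterate_succ_apply]

lemma natCast_le_a_succ_iff (hm : 0 < m) {n : ℕ} {x : ℝ} (hx : 0 < (T m)^[n] x) {c : ℕ}
    (hc : 0 < c) : c ≤ a m (n + 1) x ↔ (T m)^[n] x ≤ 1 / (c * th m) := by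
  have hθ := th_pos hm
  have hc' : (0 : ℝ) < c := Nat.cast_pos.2 hc
  rw [a, Nat.add_sub_cancel, Nat.le_floor_iff (by positivity), le_div_iff₀ (by positivity),
    le_div_iff₀ (by positivity)]
  constructor <;> intro h <;> linarith

lemma le_a_succ (hm : 0 < m) {n : ℕ} {x : ℝ} (hx : (T m)^[n] x ∈ Ioo 0 (th m)) :
    m ≤ a m (n + 1) x := by
  rw [natCast_le_a_succ_iff hm hx.1 hm, one_div_natCast_mul_th hm]
  exact hx.2.le

end Theta

section Branch
variable {m : ℕ}

/-- The inverse branch of `(T m)^[w.length]` onto the cylinder of `w`. -/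
def branch (m : ℕ) : List ℕ → ℝ → ℝ
  | [], u => u
  | b :: w, u => 1 / (th m * b + branch m w u)

lemma branch_mem_Ioo (hm : 0 < m) {w : List ℕ} (hw : ∀ b ∈ w, m ≤ b) {u : ℝ}
    (hu : u ∈ Ioo 0 (th m)) : branch m w u ∈ Ioo 0 (th m) := by
  induction w with
  | nil => exact hu
  | cons b w ih =>
    exact one_div_th_mul_add_mem_Ioo hm (hw b (by simp))
      (ih fun c hc => hw c (by simp [hc])).1

lemma iterate_T_branch (hm : 0 < m) {w : List ℕ} (hw : ∀ b ∈ w, m ≤ b) {u : ℝ}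
    (hu : u ∈ Ioo 0 (th m)) : (T m)^[w.length] (branch m w u) = u := by
  induction w with
  | nil => rfl
  | cons b w ih =>
    have hw' : ∀ c ∈ w, m ≤ c := fun c hc => hw c (by simp [hc])
    rw [List.length_cons, Function.iterate_succ_apply, branch,
      T_one_div_th_mul_add hm b (branch_mem_Ioo hm hw' hu), ih hw']

lemma a_branch (hm : 0 < m) {w : List ℕ} (hw : ∀ b ∈ w, m ≤ b) {u : ℝ}
    (hu : u ∈ Ioo 0 (th m)) {k : ℕ} (hk : k < w.length) : a m (k + 1) (branch m w u) = w[k] := by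
  induction w generalizing k with
  | nil => simp at hk
  | cons b w ih =>
    have hw' : ∀ c ∈ w, m ≤ c := fun c hc => hw c (by simp [hc])
    have hF := branch_mem_Ioo hm hw' hu
    cases k with
    | zero => exact a_one_one_div_th_mul_add hm b hF
    | succ k =>
      rw [a_succ_succ, branch, T_one_div_th_mul_add hm b hF]
      exact ih hw' (by simpa using hk)

/-- `branch m w u = (M 0 0 * u + M 0 1) / (M 1 0 * u + M 1 1)` for `M = branchMatrix m w`. -/
def branchMatrix (m : ℕ) (w : List ℕ) : Matrix (Fin 2) (Fin 2) ℝ :=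
  (w.map fun b => !![0, 1; 1, th m * b]).prod

def den (m : ℕ) (w : List ℕ) (u : ℝ) : ℝ := branchMatrix m w 1 0 * u + branchMatrix m w 1 1

lemma branchMatrix_cons (b : ℕ) (w : List ℕ) :
    branchMatrix m (b :: w) = !![0, 1; 1, th m * b] * branchMatrix m w := by
  simp [branchMatrix]

lemma det_branchMatrix (w : List ℕ) : (branchMatrix m w).det = (-1) ^ w.length := by
  induction w with
  | nil => simp [branchMatrix]
  | cons b w ih =>
    rw [branchMatrix_cons, Matrix.det_mul, ih, Matrix.det_fin_two_of, List.length_cons, pow_succ]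
    ring

lemma branchMatrix_bounds (hm : 0 < m) {w : List ℕ} (hw : ∀ b ∈ w, m ≤ b) :
    0 ≤ branchMatrix m w 0 0 ∧ 0 ≤ branchMatrix m w 0 1 ∧ 0 ≤ branchMatrix m w 1 0 ∧
      branchMatrix m w 1 0 ≤ branchMatrix m w 1 1 ∧ 1 ≤ branchMatrix m w 1 1 ∧
      (w ≠ [] → branchMatrix m w 0 0 ≤ branchMatrix m w 0 1) := by
  induction w with
  | nil => simp [branchMatrix]
  | cons b w ih =>
    obtain ⟨hA, hB, hC, hCD, hD, hAB⟩ := ih fun c hc => hw c (by simp [hc])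
    have hb := one_le_th_mul hm (hw b (by simp))
    have hCD' : branchMatrix m w 0 0 + th m * b * branchMatrix m w 1 0 ≤
        branchMatrix m w 0 1 + th m * b * branchMatrix m w 1 1 := by
      rcases eq_or_ne w [] with rfl | hne
      · simpa [branchMatrix] using hb
      · nlinarith [hAB hne]
    simp only [branchMatrix_cons, Matrix.mul_apply, Fin.sum_univ_two, Fin.isValue, Matrix.of_apply,
      Matrix.cons_val', Matrix.cons_val_zero, Matrix.cons_val_one, Matrix.cons_val_fin_one,
      zero_mul, one_mul, zero_add, ne_eq, reduceCtorEq, not_false_eq_true, forall_const]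
    refine ⟨hC, by linarith, by positivity, hCD', by nlinarith, hCD⟩

lemma den_pos (hm : 0 < m) {w : List ℕ} (hw : ∀ b ∈ w, m ≤ b) {u : ℝ} (hu : 0 ≤ u) :
    0 < den m w u := by
  obtain ⟨-, -, hC, -, hD, -⟩ := branchMatrix_bounds hm hw
  unfold den
  nlinarith

lemma den_le_den (hm : 0 < m) {w : List ℕ} (hw : ∀ b ∈ w, m ≤ b) {u v : ℝ} (huv : u ≤ v) :
    den m w u ≤ den m w v := by
  obtain ⟨-, -, hC, -, -, -⟩ := branchMatrix_bounds hm hw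
  unfold den
  nlinarith

lemma den_le_two_mul_den (hm : 0 < m) {w : List ℕ} (hw : ∀ b ∈ w, m ≤ b) {u v : ℝ}
    (hu : 0 ≤ u) (hv : v ≤ 1) : den m w v ≤ 2 * den m w u := by
  obtain ⟨-, -, hC, hCD, -, -⟩ := branchMatrix_bounds hm hw
  unfold den
  nlinarith

lemma branch_eq_div (hm : 0 < m) {w : List ℕ} (hw : ∀ b ∈ w, m ≤ b) {u : ℝ} (hu : 0 ≤ u) :
    branch m w u = (branchMatrix m w 0 0 * u + branchMatrix m w 0 1) / den m w u := by
  induction w with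
  | nil => simp [branch, den, branchMatrix]
  | cons b w ih =>
    have hw' : ∀ c ∈ w, m ≤ c := fun c hc => hw c (by simp [hc])
    have hden := den_pos hm hw' hu
    have hden' := den_pos hm hw hu
    have key : th m * b + (branchMatrix m w 0 0 * u + branchMatrix m w 0 1) / den m w u =
        den m (b :: w) u / den m w u := by
      rw [eq_div_iff hden.ne', add_mul, div_mul_cancel₀ _ hden.ne']
      simp only [den, branchMatrix_cons, Matrix.mul_apply, Fin.sum_univ_two, Fin.isValue,
        Matrix.of_apply, Matrix.cons_val', Matrix.cons_val_zero, Matrix.cons_val_one,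
        Matrix.cons_val_fin_one, one_mul]
      ring
    rw [branch, ih hw', key, one_div_div]
    simp [den, branchMatrix_cons, Matrix.mul_apply, Fin.sum_univ_two]

lemma branch_sub_branch (hm : 0 < m) {w : List ℕ} (hw : ∀ b ∈ w, m ≤ b) {u v : ℝ} (hu : 0 ≤ u)
    (hv : 0 ≤ v) :
    branch m w v - branch m w u = (-1) ^ w.length * (v - u) / (den m w u * den m w v) := by
  have hdu := den_pos hm hw hu
  have hdv := den_pos hm hw hv
  have hdet := det_branchMatrix (m := m) w
  rw [Matrix.det_fin_two] at hdet
  rw [branch_eq_div hm hw hu, branch_eq_div hm hw hv, div_sub_div _ _ hdv.ne' hdu.ne',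
    div_eq_div_iff (by positivity) (by positivity)]
  simp only [den]
  linear_combination (v - u) * ((branchMatrix m w 1 0 * u + branchMatrix m w 1 1) *
    (branchMatrix m w 1 0 * v + branchMatrix m w 1 1)) * hdet

lemma continuousOn_branch (hm : 0 < m) {w : List ℕ} (hw : ∀ b ∈ w, m ≤ b) :
    ContinuousOn (branch m w) (Ici 0) := by
  have hrat : ContinuousOn
      (fun u => (branchMatrix m w 0 0 * u + branchMatrix m w 0 1) / den m w u) (Ici 0) :=
    ContinuousOn.div (by fun_prop) (by unfold den; fun_prop) fun u hu => (den_pos hm hw hu).ne'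
  exact hrat.congr fun u hu => branch_eq_div hm hw hu

lemma injOn_branch (hm : 0 < m) {w : List ℕ} (hw : ∀ b ∈ w, m ≤ b) :
    InjOn (branch m w) (Ici 0) := by
  intro u hu v hv huv
  have h := branch_sub_branch hm hw hu hv
  rw [huv, sub_self, eq_comm, div_eq_zero_iff, mul_eq_zero] at h
  rcases h with (h | h) | h
  · exact absurd h (pow_ne_zero _ (by norm_num))
  · linarith
  · exact absurd h (mul_pos (den_pos hm hw hu) (den_pos hm hw hv)).ne'

lemma image_branch_Ioo (hm : 0 < m) {w : List ℕ} (hw : ∀ b ∈ w, m ≤ b) {γ δ : ℝ} (hγ : 0 ≤ γ)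
    (hγδ : γ ≤ δ) : branch m w '' Ioo γ δ = uIoo (branch m w γ) (branch m w δ) := by
  have hsub : Icc γ δ ⊆ Ici 0 := fun u hu => le_trans hγ hu.1
  have hcont := (continuousOn_branch hm hw).mono hsub
  rcases hcont.strictMonoOn_of_injOn_Icc' hγδ ((injOn_branch hm hw).mono hsub) with hmono | hanti
  · rw [hcont.image_Ioo_of_strictMonoOn hγδ hmono,
      uIoo_of_le (hmono.monotoneOn (left_mem_Icc.2 hγδ) (right_mem_Icc.2 hγδ) hγδ)]
  · rw [hcont.image_Ioo_of_strictAntiOn hγδ hanti,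
      uIoo_of_ge (hanti.antitoneOn (left_mem_Icc.2 hγδ) (right_mem_Icc.2 hγδ) hγδ)]

lemma measurableSet_image_branch_Ioo (hm : 0 < m) {w : List ℕ} (hw : ∀ b ∈ w, m ≤ b) {γ δ : ℝ}
    (hγ : 0 ≤ γ) (hγδ : γ ≤ δ) : MeasurableSet (branch m w '' Ioo γ δ) := by
  rw [image_branch_Ioo hm hw hγ hγδ]
  exact measurableSet_Ioo

lemma volume_image_branch_Ioo (hm : 0 < m) {w : List ℕ} (hw : ∀ b ∈ w, m ≤ b) {γ δ : ℝ}
    (hγ : 0 ≤ γ) (hγδ : γ ≤ δ) :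
    volume (branch m w '' Ioo γ δ) = ENNReal.ofReal ((δ - γ) / (den m w γ * den m w δ)) := by
  have hden := mul_pos (den_pos hm hw hγ) (den_pos hm hw (hγ.trans hγδ))
  rw [image_branch_Ioo hm hw hγ hγδ, Real.volume_uIoo, branch_sub_branch hm hw hγ (hγ.trans hγδ),
    abs_div, abs_mul, abs_pow, abs_neg, abs_one, one_pow, one_mul, abs_of_nonneg (sub_nonneg.2 hγδ),
    abs_of_pos hden]

def cyl (m : ℕ) (w : List ℕ) : Set ℝ := branch m w '' Ioo 0 (th m)

lemma measurableSet_cyl (hm : 0 < m) {w : List ℕ} (hw : ∀ b ∈ w, m ≤ b) :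
    MeasurableSet (cyl m w) :=
  measurableSet_image_branch_Ioo hm hw le_rfl (th_pos hm).le

lemma cyl_subset_Ioo (hm : 0 < m) {w : List ℕ} (hw : ∀ b ∈ w, m ≤ b) : cyl m w ⊆ Ioo 0 (th m) := by
  rintro _ ⟨u, hu, rfl⟩
  exact branch_mem_Ioo hm hw hu

-- The distortion bound `den m w θ ≤ 2 * den m w δ` makes the relative measure of
-- `branch m w '' Ioo 0 δ` in `cyl m w` comparable to `δ / θ`.
lemma ofReal_mul_volume_cyl_le (hm : 0 < m) {w : List ℕ} (hw : ∀ b ∈ w, m ≤ b) {δ : ℝ}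
    (hδ : 0 < δ) (hδθ : δ ≤ th m) :
    ENNReal.ofReal (δ / th m) * volume (cyl m w) ≤ volume (branch m w '' Ioo 0 δ) := by
  have hθ := th_pos hm
  have h0 := den_pos hm hw le_rfl
  have hθ' := den_pos hm hw hθ.le
  have hδ' := den_pos hm hw hδ.le
  have hle := den_le_den hm hw hδθ
  rw [cyl, volume_image_branch_Ioo hm hw le_rfl hθ.le, volume_image_branch_Ioo hm hw le_rfl hδ.le,
    ← ENNReal.ofReal_mul (by positivity)]
  refine ENNReal.ofReal_le_ofReal ?_
  rw [sub_zero, sub_zero, div_mul_div_comm, div_le_div_iff₀ (by positivity) (by positivity)]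
  have : 0 ≤ δ * th m * den m w 0 := by positivity
  nlinarith [mul_le_mul_of_nonneg_left hle this]

lemma volume_image_branch_Ioo_le (hm : 0 < m) {w : List ℕ} (hw : ∀ b ∈ w, m ≤ b) {δ : ℝ}
    (hδ : 0 < δ) :
    volume (branch m w '' Ioo 0 δ) ≤ ENNReal.ofReal (2 * δ / th m) * volume (cyl m w) := by
  have hθ := th_pos hm
  have h0 := den_pos hm hw le_rfl
  have hθ' := den_pos hm hw hθ.le
  have hδ' := den_pos hm hw hδ.le
  have hle := den_le_two_mul_den hm hw hδ.le (th_le_one hm)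
  rw [cyl, volume_image_branch_Ioo hm hw le_rfl hθ.le, volume_image_branch_Ioo hm hw le_rfl hδ.le,
    ← ENNReal.ofReal_mul (by positivity)]
  refine ENNReal.ofReal_le_ofReal ?_
  rw [sub_zero, sub_zero, div_mul_div_comm, div_le_div_iff₀ (by positivity) (by positivity)]
  have : 0 ≤ δ * th m * den m w 0 := by positivity
  nlinarith [mul_le_mul_of_nonneg_left hle this]

end Branch

section Digits
variable {m : ℕ}

def digits (m n : ℕ) (x : ℝ) : List ℕ := (List.range n).map fun k => a m (k + 1) x

@[simp] lemma length_digits (n : ℕ) (x : ℝ) : (digits m n x).length = n := by simp [digits]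

@[simp] lemma getElem_digits {n : ℕ} {x : ℝ} {k : ℕ} (hk : k < (digits m n x).length) :
    (digits m n x)[k] = a m (k + 1) x := by
  simp [digits]

lemma digits_succ (n : ℕ) (x : ℝ) : digits m (n + 1) x = a m 1 x :: digits m n (T m x) := by
  simp only [digits, List.range_succ_eq_map, List.map_cons, List.map_map, Function.comp_def,
    Nat.succ_eq_add_one, a_succ_succ, zero_add]

def nonterminating (m : ℕ) : Set ℝ := {x | ∀ k, (T m)^[k] x ∈ Ioo 0 (th m)}

def admissible (m n : ℕ) : Set (List ℕ) := {w | w.length = n ∧ ∀ b ∈ w, m ≤ b}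

lemma nonterminating_subset_Ioo : nonterminating m ⊆ Ioo 0 (th m) := fun _ hx => hx 0

lemma T_mem_nonterminating {x : ℝ} (hx : x ∈ nonterminating m) : T m x ∈ nonterminating m :=
  fun k => by simpa only [Function.iterate_succ_apply] using hx (k + 1)

lemma digits_mem_admissible (hm : 0 < m) (n : ℕ) {x : ℝ} (hx : x ∈ nonterminating m) :
    digits m n x ∈ admissible m n := by
  refine ⟨length_digits n x, ?_⟩
  simp only [digits, List.mem_map, List.mem_range]
  rintro _ ⟨k, -, rfl⟩
  exact le_a_succ hm (hx k)

lemma branch_digits (n : ℕ) {x : ℝ} (hx : x ∈ nonterminating m) :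
    branch m (digits m n x) ((T m)^[n] x) = x := by
  induction n generalizing x with
  | zero => rfl
  | succ n ih =>
    rw [digits_succ, Function.iterate_succ_apply, branch, ih (T_mem_nonterminating hx)]
    exact (eq_one_div_th_mul_a_add_T (hx 0).1.ne').symm

lemma mem_cyl_digits (n : ℕ) {x : ℝ} (hx : x ∈ nonterminating m) : x ∈ cyl m (digits m n x) :=
  ⟨_, hx n, branch_digits n hx⟩

lemma digits_eq_of_mem_cyl (hm : 0 < m) {w : List ℕ} (hw : ∀ b ∈ w, m ≤ b) {y : ℝ}
    (hy : y ∈ cyl m w) : digits m w.length y = w := by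
  obtain ⟨u, hu, rfl⟩ := hy
  exact List.ext_getElem (length_digits _ _) fun k hk _ => by
    rw [getElem_digits, a_branch hm hw hu (by simpa using hk)]

lemma pairwiseDisjoint_cyl (hm : 0 < m) (n : ℕ) : (admissible m n).PairwiseDisjoint (cyl m) := by
  intro w hw w' hw' hne
  refine Set.disjoint_left.2 fun y hy hy' => hne ?_
  rw [← digits_eq_of_mem_cyl hm hw.2 hy, ← digits_eq_of_mem_cyl hm hw'.2 hy', hw.1, hw'.1]

lemma volume_biUnion_cyl (hm : 0 < m) {n : ℕ} {W : Set (List ℕ)} (hW : W ⊆ admissible m n) :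
    volume (⋃ w ∈ W, cyl m w) = ∑' w : W, volume (cyl m w) :=
  measure_biUnion W.to_countable ((pairwiseDisjoint_cyl hm n).subset hW)
    fun _ hw => measurableSet_cyl hm (hW hw).2

lemma exists_eq_branch_zero (hm : 0 < m) (n : ℕ) {x : ℝ} (hx : x ∈ Ioo 0 (th m))
    (hn : (T m)^[n] x ∉ Ioo 0 (th m)) : ∃ w, x = branch m w 0 := by
  induction n generalizing x with
  | zero => exact absurd hx hn
  | succ n ih =>
    have hTx : T m x ∈ Ico 0 (th m) := T_mem_Ico hm hx.1
    have hx' := eq_one_div_th_mul_a_add_T (m := m) hx.1.ne'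
    by_cases hT : T m x ∈ Ioo 0 (th m)
    · obtain ⟨w, hw⟩ := ih hT (by rwa [Function.iterate_succ_apply] at hn)
      exact ⟨a m 1 x :: w, by rw [branch, ← hw]; exact hx'⟩
    · have hT0 : T m x = 0 := ((eq_or_lt_of_le hTx.1).resolve_right fun h => hT ⟨h, hTx.2⟩).symm
      exact ⟨[a m 1 x], by rw [branch, branch, ← hT0]; exact hx'⟩

lemma countable_Ioo_diff_nonterminating (hm : 0 < m) :
    (Ioo 0 (th m) \ nonterminating m).Countable := by
  refine (countable_range fun w : List ℕ => branch m w 0).mono ?_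
  rintro x ⟨hx, hbad⟩
  obtain ⟨n, hn⟩ : ∃ n, (T m)^[n] x ∉ Ioo 0 (th m) := by simpa [nonterminating] using hbad
  obtain ⟨w, hw⟩ := exists_eq_branch_zero hm n hx hn
  exact ⟨w, hw.symm⟩

lemma ae_restrict_mem_nonterminating (hm : 0 < m) :
    ∀ᵐ x ∂volume.restrict (Ioo 0 (th m)), x ∈ nonterminating m := by
  rw [ae_restrict_iff' measurableSet_Ioo]
  filter_upwards [(countable_Ioo_diff_nonterminating hm).ae_notMem volume] with x hx hxI
  exact not_not.1 fun h => hx ⟨hxI, h⟩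

lemma volume_inter_nonterminating (hm : 0 < m) {s : Set ℝ} (hs : s ⊆ Ioo 0 (th m)) :
    volume (s ∩ nonterminating m) = volume s := by
  have : s ∩ nonterminating m = s \ (Ioo 0 (th m) \ nonterminating m) := by
    ext x
    constructor
    · exact fun ⟨hxs, hx⟩ => ⟨hxs, fun h => h.2 hx⟩
    · exact fun ⟨hxs, hx⟩ => ⟨hxs, not_not.1 fun h => hx ⟨hs hxs, h⟩⟩
  rw [this, measure_sdiff_null ((countable_Ioo_diff_nonterminating hm).measure_zero _)]

lemma measurable_T : Measurable (T m) :=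
  Measurable.ite measurableSet_eq measurable_const <|
    (measurable_const.div measurable_id).sub <| measurable_const.mul <| measurable_from_top.comp <|
      Nat.measurable_floor.comp <| measurable_const.div (measurable_id.mul_const _)

lemma measurable_a (n : ℕ) : Measurable (a m n) :=
  Nat.measurable_floor.comp <| measurable_const.div ((measurable_T.iterate _).mul_const _)

end Digits

section Estimates
variable {m : ℕ}

lemma volume_le_a_succ_le (hm : 0 < m) (M : ℕ) {s : ℝ} (hs : 0 < s) :
    volume {x ∈ nonterminating m | s ≤ a m (M + 1) x} ≤ ENNReal.ofReal (4 / (s * th m)) := by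
  have hθ := th_pos hm
  set δ := min (th m) (2 / (s * th m))
  have hδ : 0 < δ := lt_min hθ (by positivity)
  have hcover : {x ∈ nonterminating m | s ≤ a m (M + 1) x} ⊆
      ⋃ w ∈ admissible m M, branch m w '' Ioo 0 δ := by
    rintro x ⟨hx, hsx⟩
    have hu := (hx M).1
    have h1 : s ≤ 1 / ((T m)^[M] x * th m) := hsx.trans (Nat.floor_le (by positivity))
    have h2 : (T m)^[M] x < 2 / (s * th m) := by
      rw [le_div_iff₀ (by positivity)] at h1
      rw [lt_div_iff₀ (by positivity)]
      nlinarith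
    exact mem_biUnion (digits_mem_admissible hm M hx)
      ⟨_, ⟨hu, lt_min (hx M).2 h2⟩, branch_digits M hx⟩
  calc volume {x ∈ nonterminating m | s ≤ a m (M + 1) x}
      ≤ ∑' w : admissible m M, volume (branch m w '' Ioo 0 δ) :=
        (measure_mono hcover).trans (measure_biUnion_le _ (to_countable _) _)
    _ ≤ ∑' w : admissible m M, ENNReal.ofReal (2 * δ / th m) * volume (cyl m w) :=
        ENNReal.tsum_le_tsum fun w => volume_image_branch_Ioo_le hm w.2.2 hδ
    _ = ENNReal.ofReal (2 * δ / th m) * volume (⋃ w ∈ admissible m M, cyl m w) := by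
        rw [ENNReal.tsum_mul_left, volume_biUnion_cyl hm subset_rfl]
    _ ≤ ENNReal.ofReal (2 * δ / th m) * ENNReal.ofReal (th m) := by
        gcongr
        refine (measure_mono (iUnion₂_subset fun w hw => cyl_subset_Ioo hm hw.2)).trans ?_
        rw [Real.volume_Ioo, sub_zero]
    _ ≤ ENNReal.ofReal (4 / (s * th m)) := by
        rw [← ENNReal.ofReal_mul (by positivity), div_mul_cancel₀ _ hθ.ne']
        refine ENNReal.ofReal_le_ofReal ?_
        calc 2 * δ ≤ 2 * (2 / (s * th m)) := by gcongr; exact min_le_right _ _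
          _ = 4 / (s * th m) := by ring

lemma natCast_le_a_branch (hm : 0 < m) {w : List ℕ} (hw : ∀ b ∈ w, m ≤ b) {u : ℝ}
    (hu : u ∈ Ioo 0 (th m)) {c : ℕ} (hc : 0 < c) (huc : u ≤ 1 / (c * th m)) :
    c ≤ a m (w.length + 1) (branch m w u) := by
  have hT := iterate_T_branch hm hw hu
  rwa [natCast_le_a_succ_iff hm (by rw [hT]; exact hu.1) hc, hT]

-- `hcyl` says that, up to the null set of terminating points, `s` is a union of cylinders of
-- length `M`.
lemma ofReal_mul_volume_le_volume_inter (hm : 0 < m) {M c : ℕ} (hc : 0 < c) {s : Set ℝ}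
    (hs : s ⊆ Ioo 0 (th m)) (hcyl : ∀ x ∈ s ∩ nonterminating m, cyl m (digits m M x) ⊆ s) :
    ENNReal.ofReal (min 1 ((m : ℝ) / c)) * volume s ≤ volume (s ∩ {x | c ≤ a m (M + 1) x}) := by
  have hθ := th_pos hm
  set δ := th m * min 1 ((m : ℝ) / c)
  have hδ : 0 < δ := mul_pos hθ (lt_min one_pos (by positivity))
  have hδθ : δ ≤ th m := mul_le_of_le_one_right hθ.le (min_le_left _ _)
  have hδc : δ ≤ 1 / (c * th m) := by
    have h := natCast_mul_th_sq hm
    calc δ ≤ th m * (m / c) := mul_le_mul_of_nonneg_left (min_le_right _ _) hθ.le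
      _ = 1 / (c * th m) := by field_simp; linear_combination h
  set W := digits m M '' (s ∩ nonterminating m)
  have hW : W ⊆ admissible m M := by
    rintro _ ⟨x, hx, rfl⟩
    exact digits_mem_admissible hm M hx.2
  have hsub : ⋃ w ∈ W, branch m w '' Ioo 0 δ ⊆ s ∩ {x | c ≤ a m (M + 1) x} := by
    simp only [iUnion_subset_iff]
    rintro _ ⟨x, hx, rfl⟩ _ ⟨u, hu, rfl⟩
    have hw := digits_mem_admissible hm M hx.2
    have huθ : u ∈ Ioo 0 (th m) := ⟨hu.1, hu.2.trans_le hδθ⟩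
    refine ⟨hcyl x hx ⟨u, huθ, rfl⟩, show c ≤ _ from ?_⟩
    simpa only [hw.1] using natCast_le_a_branch hm hw.2 huθ hc (hu.2.le.trans hδc)
  have hdisj : W.PairwiseDisjoint fun w => branch m w '' Ioo 0 δ :=
    ((pairwiseDisjoint_cyl hm M).subset hW).mono fun w => image_mono (Ioo_subset_Ioo_right hδθ)
  calc ENNReal.ofReal (min 1 ((m : ℝ) / c)) * volume s
      = ENNReal.ofReal (δ / th m) * volume (s ∩ nonterminating m) := by
        rw [volume_inter_nonterminating hm hs, mul_div_cancel_left₀ _ hθ.ne']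
    _ ≤ ENNReal.ofReal (δ / th m) * volume (⋃ w ∈ W, cyl m w) :=
        by gcongr; exact fun x hx => mem_biUnion (mem_image_of_mem _ hx) (mem_cyl_digits M hx.2)
    _ = ∑' w : W, ENNReal.ofReal (δ / th m) * volume (cyl m w) := by
        rw [volume_biUnion_cyl hm hW, ENNReal.tsum_mul_left]
    _ ≤ ∑' w : W, volume (branch m w '' Ioo 0 δ) :=
        ENNReal.tsum_le_tsum fun w => ofReal_mul_volume_cyl_le hm (hW w.2).2 hδ hδθ
    _ = volume (⋃ w ∈ W, branch m w '' Ioo 0 δ) :=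
        (measure_biUnion W.to_countable hdisj fun _ hw =>
          measurableSet_image_branch_Ioo hm (hW hw).2 le_rfl hδ.le).symm
    _ ≤ volume (s ∩ {x | c ≤ a m (M + 1) x}) := measure_mono hsub

lemma volume_inter_a_lt_le (hm : 0 < m) {M c : ℕ} (hc : 0 < c) {s : Set ℝ}
    (hs : s ⊆ Ioo 0 (th m)) (hcyl : ∀ x ∈ s ∩ nonterminating m, cyl m (digits m M x) ⊆ s) :
    volume (s ∩ {x | a m (M + 1) x < c}) ≤
      ENNReal.ofReal (1 - min 1 ((m : ℝ) / c)) * volume s := by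
  set r := min 1 ((m : ℝ) / c)
  set E := {x | c ≤ a m (M + 1) x}
  have hE : MeasurableSet E := measurable_a _ measurableSet_Ici
  have hfin : volume (s ∩ E) ≠ ⊤ :=
    ne_top_of_le_ne_top measure_Ioo_lt_top.ne (measure_mono (inter_subset_left.trans hs))
  have hsplit : ENNReal.ofReal (1 - r) * volume s + ENNReal.ofReal r * volume s = volume s := by
    rw [← add_mul, ← ENNReal.ofReal_add (by simp [r]) (by positivity), sub_add_cancel,
      ENNReal.ofReal_one, one_mul]
  have hdiff : s ∩ {x | a m (M + 1) x < c} = s \ E := by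
    ext x
    simp [E]
  rw [hdiff, ← ENNReal.add_le_add_iff_right hfin]
  calc volume (s \ E) + volume (s ∩ E) = volume s := by rw [add_comm, measure_inter_add_sdiff s hE]
    _ = ENNReal.ofReal (1 - r) * volume s + ENNReal.ofReal r * volume s := hsplit.symm
    _ ≤ ENNReal.ofReal (1 - r) * volume s + volume (s ∩ E) := by
        gcongr
        exact ofReal_mul_volume_le_volume_inter hm hc hs hcyl

def digitsBelow (m : ℕ) (c : ℕ → ℕ) (N K : ℕ) : Set ℝ :=
  {x ∈ Ioo 0 (th m) | ∀ k < K, a m (N + k + 1) x < c (N + k + 1)}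

lemma digitsBelow_succ (c : ℕ → ℕ) (N K : ℕ) :
    digitsBelow m c N (K + 1) =
      digitsBelow m c N K ∩ {x | a m (N + K + 1) x < c (N + K + 1)} := by
  ext x
  simp only [digitsBelow, mem_inter_iff, mem_ofPred_eq, Nat.lt_succ_iff_lt_or_eq, or_imp,
    forall_and, forall_eq, and_assoc]

lemma cyl_digits_subset_digitsBelow (hm : 0 < m) (c : ℕ → ℕ) (N K : ℕ) {x : ℝ}
    (hx : x ∈ digitsBelow m c N K ∩ nonterminating m) :
    cyl m (digits m (N + K) x) ⊆ digitsBelow m c N K := by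
  intro y hy
  have hw := digits_mem_admissible hm (N + K) hx.2
  have hdig : digits m (N + K) y = digits m (N + K) x := by
    simpa only [hw.1] using digits_eq_of_mem_cyl hm hw.2 hy
  refine ⟨cyl_subset_Ioo hm hw.2 hy, fun k hk => ?_⟩
  have hlt : N + k < (digits m (N + K) y).length := by rw [length_digits]; omega
  rw [← getElem_digits hlt, List.getElem_of_eq hdig, getElem_digits]
  exact hx.1.2 k hk

lemma volume_digitsBelow_le (hm : 0 < m) {c : ℕ → ℕ} (hc : ∀ n, 0 < c n) (N K : ℕ) :
    volume (digitsBelow m c N K) ≤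
      ENNReal.ofReal (th m * ∏ k ∈ Finset.range K, (1 - min 1 ((m : ℝ) / c (N + k + 1)))) := by
  induction K with
  | zero =>
    rw [Finset.prod_range_zero, mul_one, ← sub_zero (th m), ← Real.volume_Ioo]
    exact measure_mono fun x hx => hx.1
  | succ K ih =>
    have hs : digitsBelow m c N K ⊆ Ioo 0 (th m) := fun x hx => hx.1
    rw [digitsBelow_succ, Finset.prod_range_succ, ← mul_assoc, mul_comm,
      ENNReal.ofReal_mul (sub_nonneg.2 (min_le_left _ _))]
    exact (volume_inter_a_lt_le hm (hc _) hs fun x hx => cyl_digits_subset_digitsBelow hm c N K hx).trans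
      (by gcongr)

end Estimates

section Main
variable {m : ℕ} {φ : ℕ → ℝ}

lemma volume_forall_a_lt_eq_zero (hm : 0 < m) {c : ℕ → ℕ} (hc : ∀ n, 0 < c n)
    (hdiv : ¬Summable fun n => min 1 ((m : ℝ) / c n)) (N : ℕ) :
    volume {x ∈ Ioo 0 (th m) | ∀ n, N < n → a m n x < c n} = 0 := by
  have hshift : ¬Summable fun k => min 1 ((m : ℝ) / c (N + k + 1)) := fun h =>
    hdiv <| (summable_nat_add_iff (N + 1)).1 <| by simpa only [add_comm N, add_assoc] using h
  have hprod := tendsto_prod_one_sub_of_not_summable (fun k => by positivity)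
    (fun k => min_le_left _ _) hshift
  have hlim : Tendsto (fun K => ENNReal.ofReal (th m *
      ∏ k ∈ Finset.range K, (1 - min 1 ((m : ℝ) / c (N + k + 1))))) atTop (𝓝 0) := by
    simpa using ENNReal.tendsto_ofReal (hprod.const_mul (th m))
  refine nonpos_iff_eq_zero.1 (ge_of_tendsto' hlim fun K => ?_)
  exact (measure_mono (t := digitsBelow m c N K) fun x hx => ⟨hx.1, fun k _ => hx.2 _ (by omega)⟩).trans
    (volume_digitsBelow_le hm hc N K)

lemma ae_eventually_a_succ_lt (hm : 0 < m) (hpos : ∀ n, 1 ≤ n → 0 < φ n)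
    (hsum : Summable fun n => 1 / φ (n + 1)) {ε : ℝ} (hε : 0 < ε) :
    ∀ᵐ x, ∀ᶠ n in atTop, x ∈ nonterminating m → (a m (n + 1) x : ℝ) < ε * φ (n + 1) := by
  have hθ := th_pos hm
  have hbound : ∀ n, volume {x ∈ nonterminating m | ε * φ (n + 1) ≤ a m (n + 1) x} ≤
      ENNReal.ofReal (4 / (ε * th m) * (1 / φ (n + 1))) := fun n => by
    have hφ := hpos (n + 1) (by omega)
    convert volume_le_a_succ_le hm n (mul_pos hε hφ) using 2
    field_simp
  have hfin : ∑' n, volume {x ∈ nonterminating m | ε * φ (n + 1) ≤ a m (n + 1) x} ≠ ⊤ := by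
    refine ne_top_of_le_ne_top ?_ (ENNReal.tsum_le_tsum hbound)
    rw [← ENNReal.ofReal_tsum_of_nonneg (fun n => ?_) (hsum.mul_left _)]
    · exact ENNReal.ofReal_ne_top
    · have := hpos (n + 1) (by omega)
      positivity
  filter_upwards [ae_eventually_notMem hfin] with x hx
  filter_upwards [hx] with n hn hxn
  exact not_le.1 fun h => hn ⟨hxn, h⟩

lemma ae_limsup_eq_zero (hm : 0 < m) (hpos : ∀ n, 1 ≤ n → 0 < φ n)
    (hmono : ∀ n k, 1 ≤ n → n ≤ k → φ n ≤ φ k) (hsum : Summable fun n => 1 / φ (n + 1)) :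
    ∀ᵐ x ∂volume.restrict (Ioo 0 (th m)),
      limsup (fun N : ℕ => (((L m N x : ℝ) / φ N : ℝ) : EReal)) atTop = 0 := by
  have hφ := tendsto_atTop_of_summable_one_div hpos hsum
  have hsmall := fun j : ℕ => ae_eventually_a_succ_lt hm hpos hsum (Nat.one_div_pos_of_nat (n := j))
  filter_upwards [ae_restrict_of_ae (ae_all_iff.2 hsmall), ae_restrict_mem_nonterminating hm]
    with x hx hxn
  refine (EReal.tendsto_coe.2 (tendsto_sup_div_zero hmono hφ fun ε hε => ?_)).limsup_eq
  obtain ⟨j, hj⟩ := exists_nat_one_div_lt hε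
  rw [← map_add_atTop_eq_nat 1, eventually_map]
  filter_upwards [hx j] with n hn
  have := hpos (n + 1) (by omega)
  exact (hn hxn).le.trans (by gcongr)

lemma ae_limsup_eq_top (hm : 0 < m) (hpos : ∀ n, 1 ≤ n → 0 < φ n)
    (hmono : ∀ n k, 1 ≤ n → n ≤ k → φ n ≤ φ k) (hdiv : ¬Summable fun n => 1 / φ (n + 1)) :
    ∀ᵐ x ∂volume.restrict (Ioo 0 (th m)),
      limsup (fun N : ℕ => (((L m N x : ℝ) / φ N : ℝ) : EReal)) atTop = ⊤ := by
  have hnull : ∀ t N : ℕ, ∀ᵐ x ∂volume.restrict (Ioo 0 (th m)),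
      ¬∀ n, N < n → a m n x < ⌈t * φ n⌉₊ + 1 := fun t N => by
    have h0 := volume_forall_a_lt_eq_zero hm (c := fun n => ⌈t * φ n⌉₊ + 1) (fun n => by omega)
      (not_summable_min_one_div_ceil hpos hmono hdiv (Nat.cast_pos.2 hm) t) N
    rw [ae_restrict_iff' measurableSet_Ioo]
    filter_upwards [measure_eq_zero_iff_ae_notMem.1 h0] with x hx hxI h
    exact hx ⟨hxI, h⟩
  filter_upwards [ae_all_iff.2 fun t => ae_all_iff.2 (hnull t)] with x hx
  refine limsup_sup_div_eq_top hpos fun t => frequently_atTop.2 fun N => ?_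
  obtain ⟨n, hNn, hn⟩ : ∃ n, N < n ∧ ⌈t * φ n⌉₊ + 1 ≤ a m n x := by simpa using hx t N
  exact ⟨n, hNn.le, (Nat.le_ceil _).trans (by exact_mod_cast (Nat.le_succ _).trans hn)⟩

end Main

/-- limsup L_N(x)/φ(N) is a.e. 0 or ∞ according as ∑ 1/φ(n) converges or diverges. -/
theorem stmt_19 (m : ℕ) (hm : 2 ≤ m) (φ : ℕ → ℝ) (hpos : ∀ n, 1 ≤ n → 0 < φ n)
    (hmono : ∀ n k, 1 ≤ n → n ≤ k → φ n ≤ φ k) :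
    ((Summable fun n : ℕ => 1 / φ (n + 1)) →
        ∀ᵐ x ∂(volume.restrict (Set.Ioo 0 (th m))),
          Filter.limsup (fun N : ℕ => (((L m N x : ℝ) / φ N : ℝ) : EReal)) atTop = 0) ∧
      (¬ (Summable fun n : ℕ => 1 / φ (n + 1)) →
        ∀ᵐ x ∂(volume.restrict (Set.Ioo 0 (th m))),
          Filter.limsup (fun N : ℕ => (((L m N x : ℝ) / φ N : ℝ) : EReal)) atTop = ⊤) :=
  ⟨ae_limsup_eq_zero (by omega) hpos hmono, ae_limsup_eq_top (by omega) hpos hmono⟩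
end Theta
end
end
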